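/- Resolvent difference bound for skew-symmetric matrices (used in the analysis of the practical iteration): Let A₁, A₂ be n×n real skew-symmetric matrices and U an n×N real matrix. Then (Iₙ + A₁) and (Iₙ + A₂) are invertible and ‖(Iₙ + A₁)⁻¹·U − (Iₙ + A₂)⁻¹·U‖_F ≤ σ_max(U)·‖A₁ − A₂‖_F. -/

import Mathlib

/-!
For skew-symmetric `A` we have `xᵀ A x = 0`, hence `‖(I + A) x‖² = ‖x‖² + ‖A x‖² ≥ ‖x‖²`: the
matrix `I + A` is injective, hence invertible, and `(I + A)⁻¹` is a contraction for the spectral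
norm. The resolvent identity `(I + A₁)⁻¹ - (I + A₂)⁻¹ = (I + A₁)⁻¹ (A₂ - A₁) (I + A₂)⁻¹` and the
column-wise estimate `‖X Y Z‖_F ≤ σ_max(X) ‖Y‖_F σ_max(Z)` then give the bound.
-/

open Matrix

noncomputable section

/-- Frobenius norm of a real matrix. -/
def frobNorm {m k : ℕ} (A : Matrix (Fin m) (Fin k) ℝ) : ℝ :=
  Real.sqrt (∑ i, ∑ j, (A i j) ^ 2)

/-- Largest singular value (ℓ²-operator norm) of a real matrix. -/
def sigmaMax {m k : ℕ} (A : Matrix (Fin m) (Fin k) ℝ) : ℝ :=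
  ‖LinearMap.toContinuousLinearMap (Matrix.toEuclideanLin A)‖

open WithLp

section Frobenius

variable {m n k : ℕ}

lemma frobNorm_nonneg (A : Matrix (Fin m) (Fin k) ℝ) : 0 ≤ frobNorm A :=
  Real.sqrt_nonneg _

lemma frobNorm_sq (A : Matrix (Fin m) (Fin k) ℝ) : frobNorm A ^ 2 = ∑ i, ∑ j, A i j ^ 2 :=
  Real.sq_sqrt (by positivity)

lemma frobNorm_sq_eq_sum_norm_col_sq (A : Matrix (Fin m) (Fin k) ℝ) :
    frobNorm A ^ 2 = ∑ j, ‖toLp 2 (Aᵀ j)‖ ^ 2 := by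
  simp only [EuclideanSpace.real_norm_sq_eq, frobNorm_sq, transpose_apply]
  exact Finset.sum_comm

lemma frobNorm_transpose (A : Matrix (Fin m) (Fin k) ℝ) : frobNorm Aᵀ = frobNorm A := by
  unfold frobNorm
  rw [Finset.sum_comm]
  rfl

lemma frobNorm_sub_comm (A B : Matrix (Fin m) (Fin k) ℝ) : frobNorm (A - B) = frobNorm (B - A) := by
  rw [← neg_sub B A]
  simp only [frobNorm, Matrix.neg_apply, neg_sq]

end Frobenius

section SigmaMax

variable {m n k : ℕ}

lemma sigmaMax_nonneg (A : Matrix (Fin m) (Fin n) ℝ) : 0 ≤ sigmaMax A :=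
  norm_nonneg _

lemma norm_mulVec_le_sigmaMax_mul (A : Matrix (Fin m) (Fin n) ℝ) (x : Fin n → ℝ) :
    ‖toLp 2 (A *ᵥ x)‖ ≤ sigmaMax A * ‖toLp 2 x‖ :=
  (LinearMap.toContinuousLinearMap (toEuclideanLin A)).le_opNorm (toLp 2 x)

lemma sigmaMax_le_of_norm_mulVec_le (A : Matrix (Fin m) (Fin n) ℝ) {c : ℝ} (hc : 0 ≤ c)
    (h : ∀ x, ‖toLp 2 (A *ᵥ x)‖ ≤ c * ‖toLp 2 x‖) : sigmaMax A ≤ c :=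
  ContinuousLinearMap.opNorm_le_bound _ hc fun y => h (ofLp y)

-- `sigmaMax A` is by definition the L2 operator norm `‖A‖` of `Matrix.Norms.L2Operator`.
open scoped Matrix.Norms.L2Operator in
lemma sigmaMax_mul_le (A : Matrix (Fin m) (Fin n) ℝ) (B : Matrix (Fin n) (Fin k) ℝ) :
    sigmaMax (A * B) ≤ sigmaMax A * sigmaMax B :=
  l2_opNorm_mul A B

open scoped Matrix.Norms.L2Operator in
lemma sigmaMax_transpose (A : Matrix (Fin m) (Fin n) ℝ) : sigmaMax Aᵀ = sigmaMax A := by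
  rw [← conjTranspose_eq_transpose_of_trivial]
  exact l2_opNorm_conjTranspose A

lemma frobNorm_mul_le_sigmaMax_mul (A : Matrix (Fin m) (Fin n) ℝ) (B : Matrix (Fin n) (Fin k) ℝ) :
    frobNorm (A * B) ≤ sigmaMax A * frobNorm B := by
  have hcol : ∀ j, (A * B)ᵀ j = A *ᵥ Bᵀ j := fun j => rfl
  rw [← pow_le_pow_iff_left₀ (frobNorm_nonneg _)
    (mul_nonneg (sigmaMax_nonneg A) (frobNorm_nonneg B)) two_ne_zero, mul_pow,
    frobNorm_sq_eq_sum_norm_col_sq, frobNorm_sq_eq_sum_norm_col_sq, Finset.mul_sum]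
  gcongr with j
  rw [hcol, ← mul_pow]
  gcongr
  exact norm_mulVec_le_sigmaMax_mul A _

lemma frobNorm_mul_le_mul_sigmaMax (A : Matrix (Fin m) (Fin n) ℝ) (B : Matrix (Fin n) (Fin k) ℝ) :
    frobNorm (A * B) ≤ frobNorm A * sigmaMax B := by
  rw [← frobNorm_transpose, transpose_mul, ← frobNorm_transpose A, ← sigmaMax_transpose B, mul_comm]
  exact frobNorm_mul_le_sigmaMax_mul Bᵀ Aᵀ

lemma frobNorm_mul_mul_le {l : ℕ} (A : Matrix (Fin m) (Fin n) ℝ) (B : Matrix (Fin n) (Fin k) ℝ)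
    (C : Matrix (Fin k) (Fin l) ℝ) :
    frobNorm (A * B * C) ≤ sigmaMax A * frobNorm B * sigmaMax C := by
  rw [Matrix.mul_assoc, mul_assoc]
  exact (frobNorm_mul_le_sigmaMax_mul A _).trans <|
    mul_le_mul_of_nonneg_left (frobNorm_mul_le_mul_sigmaMax B C) (sigmaMax_nonneg A)

end SigmaMax

section Accretive

variable {ι : Type*} [Fintype ι] {A : Matrix ι ι ℝ}

lemma dotProduct_mulVec_self_eq_zero_of_transpose_eq_neg (hA : Aᵀ = -A) (x : ι → ℝ) :
    x ⬝ᵥ A *ᵥ x = 0 := by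
  have h : x ⬝ᵥ A *ᵥ x = (Aᵀ *ᵥ x) ⬝ᵥ x := by rw [mulVec_transpose, dotProduct_mulVec]
  rw [hA, neg_mulVec, neg_dotProduct, dotProduct_comm (A *ᵥ x)] at h
  linarith

variable [DecidableEq ι]

lemma norm_le_norm_one_add_mulVec (hA : ∀ x, 0 ≤ x ⬝ᵥ A *ᵥ x) (x : ι → ℝ) :
    ‖toLp 2 x‖ ≤ ‖toLp 2 ((1 + A) *ᵥ x)‖ := by
  have h : ‖toLp 2 ((1 + A) *ᵥ x)‖ ^ 2 =
      ‖toLp 2 x‖ ^ 2 + 2 * (x ⬝ᵥ A *ᵥ x) + ‖toLp 2 (A *ᵥ x)‖ ^ 2 := by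
    rw [add_mulVec, one_mulVec, toLp_add, norm_add_sq_real, EuclideanSpace.inner_toLp_toLp,
      star_trivial, dotProduct_comm]
  refine le_of_sq_le_sq ?_ (norm_nonneg _)
  nlinarith [hA x, sq_nonneg ‖toLp 2 (A *ᵥ x)‖]

lemma isUnit_one_add_of_dotProduct_mulVec_nonneg (hA : ∀ x, 0 ≤ x ⬝ᵥ A *ᵥ x) : IsUnit (1 + A) := by
  rw [← mulVec_injective_iff_isUnit]
  intro x y hxy
  have h := norm_le_norm_one_add_mulVec hA (x - y)
  rw [mulVec_sub, hxy, sub_self, toLp_zero, norm_zero, norm_le_zero_iff, toLp_eq_zero] at h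
  exact sub_eq_zero.mp h

end Accretive

section Contraction

variable {n : ℕ} {A : Matrix (Fin n) (Fin n) ℝ}

lemma sigmaMax_inv_one_add_le_one (hA : ∀ x, 0 ≤ x ⬝ᵥ A *ᵥ x) : sigmaMax (1 + A)⁻¹ ≤ 1 := by
  have hdet := (isUnit_iff_isUnit_det _).mp (isUnit_one_add_of_dotProduct_mulVec_nonneg hA)
  refine sigmaMax_le_of_norm_mulVec_le _ zero_le_one fun y => ?_
  have h := norm_le_norm_one_add_mulVec hA ((1 + A)⁻¹ *ᵥ y)
  rwa [mulVec_mulVec, mul_nonsing_inv _ hdet, one_mulVec, ← one_mul ‖toLp 2 y‖] at h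

lemma sigmaMax_inv_one_add_mul_le {k : ℕ} (hA : ∀ x, 0 ≤ x ⬝ᵥ A *ᵥ x)
    (U : Matrix (Fin n) (Fin k) ℝ) :
    sigmaMax ((1 + A)⁻¹ * U) ≤ sigmaMax U :=
  (sigmaMax_mul_le _ _).trans <| by
    simpa using mul_le_mul_of_nonneg_right (sigmaMax_inv_one_add_le_one hA) (sigmaMax_nonneg U)

end Contraction

/-- Resolvent difference bound for skew-symmetric matrices. -/
theorem skew_resolvent_difference_bound
    {n N : ℕ} (A₁ A₂ : Matrix (Fin n) (Fin n) ℝ)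
    (hA₁ : A₁ᵀ = -A₁) (hA₂ : A₂ᵀ = -A₂)
    (U : Matrix (Fin n) (Fin N) ℝ) :
    IsUnit (1 + A₁) ∧ IsUnit (1 + A₂) ∧
      frobNorm ((1 + A₁)⁻¹ * U - (1 + A₂)⁻¹ * U) ≤ sigmaMax U * frobNorm (A₁ - A₂) := by
  have hpos₁ x := (dotProduct_mulVec_self_eq_zero_of_transpose_eq_neg hA₁ x).ge
  have hpos₂ x := (dotProduct_mulVec_self_eq_zero_of_transpose_eq_neg hA₂ x).ge
  have hu₁ := isUnit_one_add_of_dotProduct_mulVec_nonneg hpos₁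
  have hu₂ := isUnit_one_add_of_dotProduct_mulVec_nonneg hpos₂
  refine ⟨hu₁, hu₂, ?_⟩
  have hres : (1 + A₁)⁻¹ * U - (1 + A₂)⁻¹ * U = (1 + A₁)⁻¹ * (A₂ - A₁) * ((1 + A₂)⁻¹ * U) := by
    rw [← Matrix.sub_mul, inv_sub_inv (iff_of_true hu₁ hu₂), add_sub_add_left_eq_sub,
      Matrix.mul_assoc]
  calc frobNorm ((1 + A₁)⁻¹ * U - (1 + A₂)⁻¹ * U)
      ≤ sigmaMax (1 + A₁)⁻¹ * frobNorm (A₂ - A₁) * sigmaMax ((1 + A₂)⁻¹ * U) := by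
        rw [hres]
        exact frobNorm_mul_mul_le _ _ _
    _ ≤ 1 * frobNorm (A₂ - A₁) * sigmaMax U := by
        have := frobNorm_nonneg (A₂ - A₁)
        gcongr
        · exact sigmaMax_nonneg _
        · exact sigmaMax_inv_one_add_le_one hpos₁
        · exact sigmaMax_inv_one_add_mul_le hpos₂ U
    _ = sigmaMax U * frobNorm (A₁ - A₂) := by rw [frobNorm_sub_comm]; ring
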